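/- A graph of branchwidth b has treewidth at most ⌊(3/2)·b⌋ − 1; consequently, any algorithm parameterized by branchwidth with running time f(b)·poly(n) yields a fixed-parameter algorithm parameterized by treewidth. -/

import Mathlib

/-- A tree decomposition of a simple graph `H`. -/
structure TreeDecomp {V : Type} (H : SimpleGraph V) where
  ι : Type
  tree : SimpleGraph ι
  isTree : tree.IsTree
  bag : ι → Set V
  cover_vertex : ∀ v, ∃ i, v ∈ bag i
  cover_edge : ∀ u v, H.Adj u v → ∃ i, u ∈ bag i ∧ v ∈ bag i
  coherent : ∀ v, (tree.induce {i | v ∈ bag i}).Connected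

/-- `H` has treewidth at most `t`: it has a tree decomposition with bags of size `≤ t + 1`. -/
def TreewidthAtMost {V : Type} (H : SimpleGraph V) (t : ℕ) : Prop :=
  ∃ d : TreeDecomp H, ∀ i, (d.bag i).ncard ≤ t + 1

/-- A branch decomposition of a simple graph `H`: an unrooted ternary tree whose leaves
are in bijection with the edges of `H`. -/
structure BranchDecomp {V : Type} (H : SimpleGraph V) where
  ι : Type
  [finι : Fintype ι]
  [decι : DecidableEq ι]
  tree : SimpleGraph ι
  [decAdj : DecidableRel tree.Adj]
  isTree : tree.IsTree
  ternary : ∀ i, tree.degree i = 1 ∨ tree.degree i = 3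
  leafOf : H.edgeSet → ι
  inj : Function.Injective leafOf
  leaves : ∀ i : ι, tree.degree i = 1 ↔ ∃ e : H.edgeSet, leafOf e = i

attribute [instance] BranchDecomp.finι BranchDecomp.decι BranchDecomp.decAdj

/-- The middle set of an edge `{i, j}` of the decomposition tree: the vertices of `H`
incident both to an edge whose leaf lies on the `i`-side and to an edge whose leaf lies on
the `j`-side of the decomposition tree with the edge `{i, j}` removed. -/
def BranchDecomp.mid {V : Type} {H : SimpleGraph V} (bd : BranchDecomp H)
    (i j : bd.ι) : Set V :=
  {v | (∃ e : H.edgeSet, v ∈ (e : Sym2 V) ∧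
          (bd.tree.deleteEdges {s(i, j)}).Reachable i (bd.leafOf e)) ∧
       (∃ e : H.edgeSet, v ∈ (e : Sym2 V) ∧
          (bd.tree.deleteEdges {s(i, j)}).Reachable j (bd.leafOf e))}

/-- `H` has branchwidth at most `b`. -/
def BranchwidthAtMost {V : Type} (H : SimpleGraph V) (b : ℕ) : Prop :=
  ∃ bd : BranchDecomp H, ∀ i j, bd.tree.Adj i j → (bd.mid i j).ncard ≤ b


open SimpleGraph Sum

set_option linter.unusedSectionVars false
section TreeLemmas

variable {ι : Type} [DecidableEq ι] {T : SimpleGraph ι}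

/-- A walk avoiding vertex `i` (or `j`) transfers to the graph with edge `s(i,j)` deleted. -/
lemma reach_del {i j a c : ι} (p : T.Walk a c) (h : i ∉ p.support ∨ j ∉ p.support) :
    (T.deleteEdges {s(i, j)}).Reachable a c := by
  refine ⟨p.toDeleteEdges _ (fun e he => ?_)⟩
  simp only [Set.mem_singleton_iff]
  rintro rfl
  rcases h with h | h
  · exact h (p.fst_mem_support_of_mem_edges he)
  · exact h (p.snd_mem_support_of_mem_edges he)

/-- In a tree, deleting an edge disconnects its endpoints. -/
lemma not_reach_del (hT : T.IsTree) {i j : ι} (h : T.Adj i j) :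
    ¬ (T.deleteEdges {s(i, j)}).Reachable i j := by
  rintro ⟨w⟩
  have hw : ∀ e ∈ w.toPath.1.edges, e ∈ T.edgeSet := fun e he =>
    edgeSet_mono (T.deleteEdges_le _) ((w.toPath.1.edges_subset_edgeSet) he)
  have hp : (w.toPath.1.transfer T hw).IsPath := w.toPath.2.transfer hw
  have hne : s(i,j) ∉ (w.toPath.1.transfer T hw).edges := by
    rw [SimpleGraph.Walk.edges_transfer]
    intro hmem
    have := w.toPath.1.edges_subset_edgeSet hmem
    rw [SimpleGraph.edgeSet_deleteEdges] at this
    simp at this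
  -- the one-edge path
  have h2 : (SimpleGraph.Walk.cons h .nil).IsPath := by simp [h.ne]
  have := hT.existsUnique_path i j
  obtain ⟨q, -, hq⟩ := this
  have e1 := hq _ hp
  have e2 := hq _ h2
  apply hne
  rw [e1, ← e2]
  simp

end TreeLemmas

section TreeLemmas2
variable {ι : Type} [DecidableEq ι] {T : SimpleGraph ι}

/-- From reachability on the far side of a deleted edge, get a path avoiding the near endpoint. -/
lemma exists_path_avoiding (hT : T.IsTree) {i j x : ι} (h : T.Adj i j)
    (hr : (T.deleteEdges {s(i, j)}).Reachable j x) :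
    ∃ p : T.Walk j x, p.IsPath ∧ i ∉ p.support := by
  obtain ⟨w⟩ := hr
  refine ⟨w.toPath.1.transfer T (fun e he => edgeSet_mono (T.deleteEdges_le _)
    (w.toPath.1.edges_subset_edgeSet he)), w.toPath.2.transfer _, ?_⟩
  rw [SimpleGraph.Walk.support_transfer]
  intro hi
  exact not_reach_del hT h
    (Reachable.symm ⟨(w.toPath.1.takeUntil i hi)⟩)

/-- Every vertex is on one side or the other of a tree edge. -/
lemma side_total (hT : T.IsTree) {i j : ι} (h : T.Adj i j) (x : ι) :
    (T.deleteEdges {s(i, j)}).Reachable i x ∨ (T.deleteEdges {s(i, j)}).Reachable j x := by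
  obtain ⟨w⟩ := hT.isConnected.preconnected i x
  set p := w.toPath.1 with hp
  have hpp : p.IsPath := w.toPath.2
  by_cases hj : j ∈ p.support
  · right
    refine reach_del (p.dropUntil j hj) (Or.inl ?_)
    have key : p.support = (p.takeUntil j hj).support ++ (p.dropUntil j hj).support.tail := by
      conv_lhs => rw [← p.take_spec hj]
      rw [SimpleGraph.Walk.support_append]
    have hnodup : ((p.takeUntil j hj).support ++ (p.dropUntil j hj).support.tail).Nodup := by
      rw [← key]; exact hpp.support_nodup
    have hd := (List.nodup_append'.mp hnodup).2.2
    intro hi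
    rw [SimpleGraph.Walk.support_eq_cons (p.dropUntil j hj)] at hi
    rcases List.mem_cons.mp hi with rfl | hi
    · exact h.ne rfl
    · exact hd ((p.takeUntil j hj).start_mem_support) hi
  · left
    exact reach_del p (Or.inr hj)

end TreeLemmas2

section TreeLemmas3
variable {ι : Type} [DecidableEq ι] {T : SimpleGraph ι}

/-- From `i`, any other vertex is reached through a first-step neighbor, on that
neighbor's side. -/
lemma first_step (hT : T.IsTree) {i x : ι} (hne : x ≠ i) :
    ∃ y, T.Adj i y ∧ (T.deleteEdges {s(i, y)}).Reachable y x := by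
  obtain ⟨w⟩ := hT.isConnected.preconnected i x
  have hpp : w.toPath.1.IsPath := w.toPath.2
  obtain ⟨y, q, h, hpeq⟩ := SimpleGraph.Walk.exists_eq_cons_of_ne (Ne.symm hne) w.toPath.1
  rw [hpeq, SimpleGraph.Walk.cons_isPath_iff] at hpp
  exact ⟨y, q, reach_del h (Or.inl hpp.2)⟩

/-- If `x` is on the far side of edge `(i,j)`, then for any other neighbor `m` of `i`,
`x` is on the `i`-side of edge `(i,m)`. -/
lemma other_side (hT : T.IsTree) {i j m x : ι} (hj : T.Adj i j) (hm : T.Adj i m)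
    (hne : j ≠ m) (hx : (T.deleteEdges {s(i, j)}).Reachable j x) :
    (T.deleteEdges {s(i, m)}).Reachable i x := by
  obtain ⟨p, hp, hip⟩ := exists_path_avoiding hT hj hx
  have hadj : (T.deleteEdges {s(i, m)}).Adj i j := by
    rw [SimpleGraph.deleteEdges_adj]
    refine ⟨hj, ?_⟩
    simp only [Set.mem_singleton_iff, Sym2.eq, Sym2.rel_iff', Prod.mk.injEq, Prod.swap_prod_mk]
    push_neg
    exact ⟨fun h1 h2 => hne h2, fun h1 _ => hm.ne h1⟩
  have : (T.deleteEdges {s(i, m)}).Reachable j x := reach_del p (Or.inl hip)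
  exact (hadj.reachable).trans this

/-- Two distinct far sides at a vertex are disjoint. -/
lemma side_unique (hT : T.IsTree) {i j m x : ι} (hj : T.Adj i j) (hm : T.Adj i m)
    (hne : j ≠ m) (hx : (T.deleteEdges {s(i, j)}).Reachable j x)
    (hx' : (T.deleteEdges {s(i, m)}).Reachable m x) : False :=
  not_reach_del hT hm ((other_side hT hj hm hne hx).trans hx'.symm)

end TreeLemmas3

section BD
variable {V : Type} [Fintype V] [DecidableEq V] {H : SimpleGraph V} (bd : BranchDecomp H)

/-- The bag at a node of the decomposition tree. -/
def bagOf (i : bd.ι) : Set V :=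
  {v | ∃ e : H.edgeSet, bd.leafOf e = i ∧ v ∈ (e : Sym2 V)} ∪
    ⋃ j ∈ {j | bd.tree.Adj i j}, bd.mid i j

lemma mem_bagOf_of_mid {i j : bd.ι} (h : bd.tree.Adj i j) {v : V} (hv : v ∈ bd.mid i j) :
    v ∈ bagOf bd i :=
  Or.inr (Set.mem_biUnion h hv)

lemma mem_bagOf_of_leaf {i : bd.ι} {e : H.edgeSet} (h : bd.leafOf e = i) {v : V}
    (hv : v ∈ (e : Sym2 V)) : v ∈ bagOf bd i :=
  Or.inl ⟨e, h, hv⟩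

/-- From a leaf of the decomposition tree, nothing else is reachable once the pendant
edge is deleted. -/
lemma leaf_reach {i j x : bd.ι} (hdeg : bd.tree.degree i = 1) (hj : bd.tree.Adj i j)
    (hr : (bd.tree.deleteEdges {s(i, j)}).Reachable i x) : x = i := by
  obtain ⟨w⟩ := hr
  cases w with
  | nil => rfl
  | @cons _ y _ h q =>
    exfalso
    rw [SimpleGraph.deleteEdges_adj] at h
    have hy : y ∈ bd.tree.neighborFinset i := by
      rw [SimpleGraph.mem_neighborFinset]; exact h.1
    have hjn : j ∈ bd.tree.neighborFinset i := by
      rw [SimpleGraph.mem_neighborFinset]; exact hj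
    have hcard : (bd.tree.neighborFinset i).card = 1 := hdeg
    have := Finset.card_le_one.mp (le_of_eq hcard) _ hy _ hjn
    apply h.2
    rw [this]
    rfl

lemma bagOf_leaf_subset {i : bd.ι} {e : H.edgeSet} (h : bd.leafOf e = i) :
    bagOf bd i ⊆ {v | v ∈ (e : Sym2 V)} := by
  have hdeg : bd.tree.degree i = 1 := (bd.leaves i).mpr ⟨e, h⟩
  rintro v (⟨e', he', hv⟩ | hv)
  · have : e' = e := bd.inj (by rw [he', h])
    rwa [this] at hv
  · simp only [Set.mem_iUnion] at hv
    obtain ⟨j, hj, ⟨e1, hv1, hr1⟩, -⟩ := hv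
    have := leaf_reach bd hdeg hj hr1
    have he1 : e1 = e := bd.inj (by rw [this, h])
    rwa [he1] at hv1

end BD

section Counting
variable {V : Type} [DecidableEq V]

lemma two_mul_card_union_le (A B C : Finset V)
    (h : ∀ v ∈ A ∪ B ∪ C, (v ∈ A ∧ v ∈ B) ∨ (v ∈ A ∧ v ∈ C) ∨ (v ∈ B ∧ v ∈ C)) :
    2 * (A ∪ B ∪ C).card ≤ A.card + B.card + C.card := by
  classical
  set U := A ∪ B ∪ C with hU
  have h1 : U.card • 2 ≤ ∑ v ∈ U,
      ((if v ∈ A then 1 else 0) + (if v ∈ B then 1 else 0) + (if v ∈ C then 1 else 0)) := by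
    apply Finset.card_nsmul_le_sum
    intro x hx
    rcases h x hx with ⟨h1, h2⟩ | ⟨h1, h2⟩ | ⟨h1, h2⟩ <;> simp [h1, h2]
  have h2 : ∑ v ∈ U,
      ((if v ∈ A then 1 else 0) + (if v ∈ B then 1 else 0) + (if v ∈ C then 1 else 0))
      = (U.filter (· ∈ A)).card + (U.filter (· ∈ B)).card + (U.filter (· ∈ C)).card := by
    rw [Finset.sum_add_distrib, Finset.sum_add_distrib, Finset.sum_boole, Finset.sum_boole,
      Finset.sum_boole]
    push_cast
    rfl
  have hA : U.filter (· ∈ A) = A := by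
    ext x; simp only [Finset.mem_filter, hU, Finset.mem_union]
    constructor
    · rintro ⟨-, h⟩; exact h
    · intro h; exact ⟨Or.inl (Or.inl h), h⟩
  have hB : U.filter (· ∈ B) = B := by
    ext x; simp only [Finset.mem_filter, hU, Finset.mem_union]
    constructor
    · rintro ⟨-, h⟩; exact h
    · intro h; exact ⟨Or.inl (Or.inr h), h⟩
  have hC : U.filter (· ∈ C) = C := by
    ext x; simp only [Finset.mem_filter, hU, Finset.mem_union]
    constructor
    · rintro ⟨-, h⟩; exact h
    · intro h; exact ⟨Or.inr h, h⟩
  rw [h2, hA, hB, hC, smul_eq_mul] at h1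
  omega

end Counting

section BD2
variable {V : Type} [Fintype V] [DecidableEq V] {H : SimpleGraph V} (bd : BranchDecomp H)

lemma exists_other_mid {i j : bd.ι} (hdeg : bd.tree.degree i = 3) (hj : bd.tree.Adj i j)
    {v : V} (hv : v ∈ bd.mid i j) : ∃ y, bd.tree.Adj i y ∧ y ≠ j ∧ v ∈ bd.mid i y := by
  obtain ⟨⟨e1, hv1, hr1⟩, ⟨e2, hv2, hr2⟩⟩ := hv
  have hne1 : bd.leafOf e1 ≠ i := by
    intro h
    have := (bd.leaves i).mpr ⟨e1, h⟩
    omega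
  obtain ⟨y, hy, hry⟩ := first_step bd.isTree hne1
  have hyj : y ≠ j := by
    rintro rfl
    exact not_reach_del bd.isTree hj (hr1.trans hry.symm)
  refine ⟨y, hy, hyj, ⟨e2, hv2, ?_⟩, ⟨e1, hv1, hry⟩⟩
  exact other_side bd.isTree hj hy (Ne.symm hyj) hr2

lemma bagOf_ncard_deg3 {b : ℕ} {i : bd.ι} (hdeg : bd.tree.degree i = 3)
    (hmid : ∀ j, bd.tree.Adj i j → (bd.mid i j).ncard ≤ b) :
    (bagOf bd i).ncard ≤ 3 * b / 2 := by
  classical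
  obtain ⟨j1, j2, j3, h12, h13, h23, hN⟩ := Finset.card_eq_three.mp hdeg
  have hadj : ∀ j, bd.tree.Adj i j ↔ (j = j1 ∨ j = j2 ∨ j = j3) := by
    intro j
    rw [← SimpleGraph.mem_neighborFinset, hN]
    simp
  have hA1 : bd.tree.Adj i j1 := (hadj j1).mpr (Or.inl rfl)
  have hA2 : bd.tree.Adj i j2 := (hadj j2).mpr (Or.inr (Or.inl rfl))
  have hA3 : bd.tree.Adj i j3 := (hadj j3).mpr (Or.inr (Or.inr rfl))
  set A := (Set.toFinite (bd.mid i j1)).toFinset with hA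
  set B := (Set.toFinite (bd.mid i j2)).toFinset with hB
  set C := (Set.toFinite (bd.mid i j3)).toFinset with hC
  have hbag : bagOf bd i = ↑(A ∪ B ∪ C) := by
    ext v
    simp only [bagOf, Set.mem_union, Set.mem_setOf_eq, Set.mem_iUnion, Finset.coe_union,
      Set.Finite.coe_toFinset, hA, hB, hC]
    constructor
    · rintro (⟨e, he, hv⟩ | ⟨j, hj, hv⟩)
      · exfalso
        have := (bd.leaves i).mpr ⟨e, he⟩
        omega
      · rcases (hadj j).mp hj with rfl | rfl | rfl
        · exact Or.inl (Or.inl hv)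
        · exact Or.inl (Or.inr hv)
        · exact Or.inr hv
    · rintro ((hv | hv) | hv)
      · exact Or.inr ⟨j1, hA1, hv⟩
      · exact Or.inr ⟨j2, hA2, hv⟩
      · exact Or.inr ⟨j3, hA3, hv⟩
  have key : 2 * (A ∪ B ∪ C).card ≤ A.card + B.card + C.card := by
    apply two_mul_card_union_le
    intro v hv
    have hv' : v ∈ bd.mid i j1 ∨ v ∈ bd.mid i j2 ∨ v ∈ bd.mid i j3 := by
      simp only [Finset.mem_union, hA, hB, hC, Set.Finite.mem_toFinset] at hv
      tauto
    have main : ∀ j, bd.tree.Adj i j → v ∈ bd.mid i j →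
        ∃ y, bd.tree.Adj i y ∧ y ≠ j ∧ v ∈ bd.mid i y := fun j hj hvj =>
      exists_other_mid bd hdeg hj hvj
    simp only [Finset.mem_union, hA, hB, hC, Set.Finite.mem_toFinset]
    rcases hv' with hv' | hv' | hv'
    · obtain ⟨y, hy, hyne, hvy⟩ := main j1 hA1 hv'
      rcases (hadj y).mp hy with rfl | rfl | rfl
      · exact absurd rfl hyne
      · exact Or.inl ⟨hv', hvy⟩
      · exact Or.inr (Or.inl ⟨hv', hvy⟩)
    · obtain ⟨y, hy, hyne, hvy⟩ := main j2 hA2 hv'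
      rcases (hadj y).mp hy with rfl | rfl | rfl
      · exact Or.inl ⟨hvy, hv'⟩
      · exact absurd rfl hyne
      · exact Or.inr (Or.inr ⟨hv', hvy⟩)
    · obtain ⟨y, hy, hyne, hvy⟩ := main j3 hA3 hv'
      rcases (hadj y).mp hy with rfl | rfl | rfl
      · exact Or.inr (Or.inl ⟨hvy, hv'⟩)
      · exact Or.inr (Or.inr ⟨hvy, hv'⟩)
      · exact absurd rfl hyne
  have cardA : A.card ≤ b := by
    rw [hA, ← Set.ncard_eq_toFinset_card _ (Set.toFinite _)]
    exact hmid j1 hA1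
  have cardB : B.card ≤ b := by
    rw [hB, ← Set.ncard_eq_toFinset_card _ (Set.toFinite _)]
    exact hmid j2 hA2
  have cardC : C.card ≤ b := by
    rw [hC, ← Set.ncard_eq_toFinset_card _ (Set.toFinite _)]
    exact hmid j3 hA3
  rw [hbag, Set.ncard_coe_finset]
  omega

lemma bagOf_ncard {b : ℕ} (hb : 2 ≤ b)
    (hmid : ∀ i j, bd.tree.Adj i j → (bd.mid i j).ncard ≤ b) (i : bd.ι) :
    (bagOf bd i).ncard ≤ 3 * b / 2 := by
  rcases bd.ternary i with hdeg | hdeg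
  · obtain ⟨e, he⟩ := (bd.leaves i).mp hdeg
    have hsub := bagOf_leaf_subset bd he
    obtain ⟨⟨u, w⟩, hrep⟩ := Quot.exists_rep (e : Sym2 V)
    have h2 : {v | v ∈ (e : Sym2 V)} = {u, w} := by
      ext x
      simp only [Set.mem_setOf_eq, ← hrep, Set.mem_insert_iff, Set.mem_singleton_iff]
      exact Sym2.mem_iff
    have : (bagOf bd i).ncard ≤ ({u, w} : Set V).ncard := by
      apply Set.ncard_le_ncard _ (Set.toFinite _)
      rw [← h2]; exact hsub
    have h3 : ({u, w} : Set V).ncard ≤ 2 := by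
      apply le_trans (Set.ncard_insert_le _ _)
      simp
    omega
  · exact bagOf_ncard_deg3 bd hdeg (hmid i)

end BD2

section BD3
variable {V : Type} [Fintype V] [DecidableEq V] {H : SimpleGraph V} (bd : BranchDecomp H)

/-- Along the path from a node of the bag of `u` to a leaf carrying an edge of `u`, every
node's bag contains `u`. -/
lemma bagOf_along_path' {u : V} {e₀ : H.edgeSet} (hu : u ∈ (e₀ : Sym2 V)) :
    ∀ {i l : bd.ι} (p : bd.tree.Walk i l), p.IsPath → l = bd.leafOf e₀ → u ∈ bagOf bd i →
      ∀ x ∈ p.support, u ∈ bagOf bd x := by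
  intro i l p
  induction p with
  | nil =>
    intro _ _ hbag x hx
    simp only [SimpleGraph.Walk.support_nil, List.mem_singleton] at hx
    subst hx
    exact hbag
  | @cons i m _ h q ih =>
    intro hp hl hbag x hx
    subst hl
    rw [SimpleGraph.Walk.support_cons, List.mem_cons] at hx
    rw [SimpleGraph.Walk.cons_isPath_iff] at hp
    obtain ⟨hq, hiq⟩ := hp
    -- first derive u ∈ bagOf bd m
    have hβ : (bd.tree.deleteEdges {s(m, i)}).Reachable m (bd.leafOf e₀) :=
      reach_del q (Or.inr hiq)
    have hα : ∃ e : H.edgeSet, u ∈ (e : Sym2 V) ∧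
        (bd.tree.deleteEdges {s(m, i)}).Reachable i (bd.leafOf e) := by
      rcases hbag with ⟨e, he, hue⟩ | hbag
      · exact ⟨e, hue, by rw [he]⟩
      · simp only [Set.mem_iUnion, Set.mem_setOf_eq, exists_prop] at hbag
        obtain ⟨j, hj, ⟨e1, hu1, hr1⟩, ⟨e2, hu2, hr2⟩⟩ := hbag
        by_cases hjm : j = m
        · subst hjm
          exact ⟨e1, hu1, by rwa [show s(i, j) = s(j, i) from Sym2.eq_swap] at hr1⟩
        · refine ⟨e2, hu2, ?_⟩
          have := other_side bd.isTree hj h hjm hr2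
          rwa [show s(i, m) = s(m, i) from Sym2.eq_swap] at this
    have hm : u ∈ bagOf bd m := by
      obtain ⟨e, hue, hre⟩ := hα
      exact mem_bagOf_of_mid bd h.symm ⟨⟨e₀, hu, hβ⟩, ⟨e, hue, hre⟩⟩
    rcases hx with rfl | hx
    · exact hbag
    · exact ih hq rfl hm x hx

lemma bagOf_along_path {u : V} {e₀ : H.edgeSet} (hu : u ∈ (e₀ : Sym2 V))
    {i : bd.ι} (p : bd.tree.Walk i (bd.leafOf e₀)) (hp : p.IsPath) (hbag : u ∈ bagOf bd i) :
    ∀ x ∈ p.support, u ∈ bagOf bd x :=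
  bagOf_along_path' bd hu p hp rfl hbag

end BD3

section Induce

/-- Lift a walk whose support lies in `s` to reachability in the induced subgraph. -/
lemma induce_reach {W : Type} {G : SimpleGraph W} {s : Set W} :
    ∀ {a c : W} (p : G.Walk a c) (_ : ∀ x ∈ p.support, x ∈ s) (ha : a ∈ s) (hc : c ∈ s),
      (G.induce s).Reachable ⟨a, ha⟩ ⟨c, hc⟩ := by
  intro a c p
  induction p with
  | nil => intro _ ha hc; exact Reachable.refl _
  | @cons a z _ hadj q ih =>
    intro hp ha hc
    have hz : z ∈ s := hp z (by simp)
    have hstep : (G.induce s).Adj ⟨a, ha⟩ ⟨z, hz⟩ := hadj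
    exact hstep.reachable.trans (ih (fun x hx => hp x (by simp [hx])) hz hc)

/-- No cycle passes through a vertex with (at most) one neighbor. -/
lemma not_mem_cycle_support_of_unique_nbr {W : Type} [DecidableEq W] {G : SimpleGraph W}
    {x y₀ : W} (h : ∀ y, G.Adj x y → y = y₀) {u : W} {c : G.Walk u u}
    (hc : c.IsCycle) : x ∉ c.support := by
  intro hx
  have hc' := hc.rotate hx
  cases hcc : c.rotate x hx with
  | nil =>
    rw [hcc] at hc'
    exact SimpleGraph.Walk.IsCycle.not_of_nil hc'
  | @cons _ z _ hadj q =>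
    rw [hcc] at hc'
    have hz : z = y₀ := h z hadj
    subst hz
    rw [SimpleGraph.Walk.cons_isCycle_iff] at hc'
    obtain ⟨hq, hne⟩ := hc'
    obtain ⟨z', hz', r, hr⟩ :=
      SimpleGraph.Walk.exists_eq_cons_of_ne (hadj.ne) q.reverse
    have hz0 : z' = z := h z' hz'
    apply hne
    have : s(x, z') ∈ q.reverse.edges := by rw [hr]; simp
    rw [SimpleGraph.Walk.edges_reverse, List.mem_reverse] at this
    rwa [hz0] at this

end Induce

section Big
variable {V : Type} [Fintype V] [DecidableEq V] {H : SimpleGraph V} (bd : BranchDecomp H)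

/-- The decomposition tree extended with one pendant vertex for each vertex of `H`. -/
def bigGraph (f : V → bd.ι) : SimpleGraph (bd.ι ⊕ V) where
  Adj x y := match x, y with
    | inl i, inl j => bd.tree.Adj i j
    | inl i, inr v => f v = i
    | inr v, inl i => f v = i
    | inr _, inr _ => False
  symm := ⟨by
    rintro (i | v) (j | w) h
    · exact h.symm
    · exact h
    · exact h
    · exact h.elim⟩
  loopless := ⟨by
    rintro (i | v) h
    · exact bd.tree.irrefl h
    · exact h⟩

/-- The inclusion homomorphism. -/
def bigHom (f : V → bd.ι) : bd.tree →g bigGraph bd f := ⟨inl, fun h => h⟩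

lemma big_pull (f : V → bd.ι) :
    ∀ {x y : bd.ι ⊕ V} (p : (bigGraph bd f).Walk x y) (_ : ∀ z ∈ p.support, z.isLeft),
      ∃ (a c : bd.ι) (ha : x = inl a) (hc : y = inl c) (q : bd.tree.Walk a c),
        p = (q.map (bigHom bd f)).copy ha.symm hc.symm := by
  intro x y p
  induction p with
  | @nil u =>
    intro h
    obtain ⟨a, rfl⟩ := Sum.isLeft_iff.mp (h u (by simp))
    exact ⟨a, a, rfl, rfl, SimpleGraph.Walk.nil, rfl⟩
  | @cons x z y hadj q ih =>
    intro h
    obtain ⟨a, c, ha, hc, q', hq'⟩ := ih (fun w hw => h w (by simp [hw]))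
    obtain ⟨a0, rfl⟩ := Sum.isLeft_iff.mp (h x (by simp))
    subst ha hc hq'
    have hadj' : bd.tree.Adj a0 a := hadj
    exact ⟨a0, c, rfl, rfl, SimpleGraph.Walk.cons hadj' q', rfl⟩

lemma big_isTree (f : V → bd.ι) : (bigGraph bd f).IsTree := by
  constructor
  · rw [SimpleGraph.connected_iff]
    have hreach : ∀ x : bd.ι ⊕ V, ∃ i : bd.ι, (bigGraph bd f).Reachable x (inl i) := by
      rintro (i | v)
      · exact ⟨i, Reachable.refl _⟩
      · exact ⟨f v, SimpleGraph.Adj.reachable (show f v = f v from rfl)⟩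
    constructor
    · intro x y
      obtain ⟨i, hi⟩ := hreach x
      obtain ⟨j, hj⟩ := hreach y
      have : (bigGraph bd f).Reachable (inl i) (inl j) :=
        (bd.isTree.isConnected.preconnected i j).map (bigHom bd f)
      exact (hi.trans this).trans hj.symm
    · obtain ⟨i⟩ := bd.isTree.isConnected.nonempty
      exact ⟨inl i⟩
  · intro x c hc
    have hno : ∀ z ∈ c.support, z.isLeft := by
      intro z hz
      cases z with
      | inl i => rfl
      | inr v =>
        exfalso
        refine not_mem_cycle_support_of_unique_nbr
          (x := inr v) (y₀ := (inl (f v) : bd.ι ⊕ V)) ?_ hc hz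
        rintro (j | w) hadj
        · rw [show f v = j from hadj]
        · exact hadj.elim
    obtain ⟨a, c', ha, hc', q, hq⟩ := big_pull bd f c hno
    subst ha
    have hac : a = c' := by simpa using hc'
    subst hac
    rw [hq] at hc
    change (q.map (bigHom bd f)).IsCycle at hc
    rw [SimpleGraph.Walk.map_isCycle_iff_of_injective Sum.inl_injective] at hc
    exact bd.isTree.IsAcyclic q hc

end Big

/-- Robertson–Seymour.  A graph of branchwidth `b ≥ 2` has treewidth at
most `⌊(3/2)·b⌋ - 1`.  (Consequently, any algorithm parameterized by branchwidth yields a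
fixed-parameter algorithm parameterized by treewidth.) -/
theorem treewidth_le_of_branchwidth {V : Type} [Fintype V] [DecidableEq V]
    (H : SimpleGraph V) (b : ℕ) (hb : 2 ≤ b) (hbw : BranchwidthAtMost H b) :
    TreewidthAtMost H (3 * b / 2 - 1) := by
  classical
  obtain ⟨bd, hmid⟩ := hbw
  have hι : Nonempty bd.ι := bd.isTree.isConnected.nonempty
  let pick : V → bd.ι := fun v =>
    if h : ∃ e : H.edgeSet, v ∈ (e : Sym2 V) then bd.leafOf h.choose
    else Classical.arbitrary bd.ι
  refine ⟨⟨bd.ι ⊕ V, bigGraph bd pick, big_isTree bd pick,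
    Sum.elim (fun i => bagOf bd i) (fun v => ({v} : Set V)), ?_, ?_, ?_⟩, ?_⟩
  · -- cover_vertex
    intro v
    exact ⟨inr v, Set.mem_singleton v⟩
  · -- cover_edge
    intro u v huv
    refine ⟨inl (bd.leafOf ⟨s(u, v), huv⟩), ?_, ?_⟩
    · exact mem_bagOf_of_leaf bd rfl (by simp)
    · exact mem_bagOf_of_leaf bd rfl (by simp)
  · -- coherent
    intro v
    by_cases hv : ∃ e : H.edgeSet, v ∈ (e : Sym2 V)
    · have hv0 : v ∈ (hv.choose : Sym2 V) := hv.choose_spec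
      have hpick : pick v = bd.leafOf hv.choose := dif_pos hv
      have hanchor : v ∈ bagOf bd (bd.leafOf hv.choose) := mem_bagOf_of_leaf bd rfl hv0
      have hanchor' : (inl (bd.leafOf hv.choose) : bd.ι ⊕ V) ∈
          {x | v ∈ Sum.elim (fun i => bagOf bd i) (fun w => ({w} : Set V)) x} := hanchor
      rw [SimpleGraph.connected_iff]
      refine ⟨?_, ⟨⟨_, hanchor'⟩⟩⟩
      have key : ∀ (x : bd.ι ⊕ V)
          (hx : x ∈ {x | v ∈ Sum.elim (fun i => bagOf bd i) (fun w => ({w} : Set V)) x}),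
          ((bigGraph bd pick).induce _).Reachable ⟨x, hx⟩ ⟨_, hanchor'⟩ := by
        rintro (i | w) hx
        · have hxi : v ∈ bagOf bd i := hx
          obtain ⟨w0⟩ := bd.isTree.isConnected.preconnected i (bd.leafOf hv.choose)
          have hsupp := bagOf_along_path bd hv0 w0.toPath.1 w0.toPath.2 hxi
          refine induce_reach (w0.toPath.1.map (bigHom bd pick)) ?_ hx hanchor'
          intro z hz
          rw [SimpleGraph.Walk.support_map, List.mem_map] at hz
          obtain ⟨x', hx', rfl⟩ := hz
          exact hsupp x' hx'
        · have hwv : w = v := by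
            have : v ∈ ({w} : Set V) := hx
            rw [Set.mem_singleton_iff] at this
            exact this.symm
          have hstep : ((bigGraph bd pick).induce
              {x | v ∈ Sum.elim (fun i => bagOf bd i) (fun w => ({w} : Set V)) x}).Adj
              ⟨inr w, hx⟩ ⟨inl (bd.leafOf hv.choose), hanchor'⟩ := by
            show pick w = bd.leafOf hv.choose
            rw [hwv]; exact hpick
          exact hstep.reachable
      intro a b
      exact (key a.1 a.2).trans (key b.1 b.2).symm
    · have hS : {x | v ∈ Sum.elim (fun i => bagOf bd i) (fun w => ({w} : Set V)) x}
          = {(inr v : bd.ι ⊕ V)} := by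
        ext x
        cases x with
        | inl i =>
          simp only [Set.mem_setOf_eq, Sum.elim_inl, Set.mem_singleton_iff]
          constructor
          · rintro (⟨e, -, hve⟩ | hmem)
            · exact absurd ⟨e, hve⟩ hv
            · simp only [Set.mem_iUnion, Set.mem_setOf_eq, exists_prop] at hmem
              obtain ⟨j, -, ⟨e, hve, -⟩, -⟩ := hmem
              exact absurd ⟨e, hve⟩ hv
          · intro h; exact absurd h (by simp)
        | inr w =>
          simp only [Set.mem_setOf_eq, Sum.elim_inr, Set.mem_singleton_iff]
          constructor
          · intro h; rw [h]
          · intro h; rw [Sum.inr.injEq] at h; exact h.symm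
      rw [hS, SimpleGraph.connected_iff]
      constructor
      · intro a b
        have : a = b := Subtype.ext (by rw [a.2, b.2])
        rw [this]
      · exact ⟨⟨inr v, rfl⟩⟩
  · -- sizes
    rintro (i | w)
    · have h1 := bagOf_ncard bd hb hmid i
      have h2 : 3 ≤ 3 * b / 2 := by omega
      simp only [Sum.elim_inl]
      omega
    · simp only [Sum.elim_inr, Set.ncard_singleton]
      omega
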